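/- For all S1, S2 > 0, the rate R = (1/2)·log₂(1/(1/(1+S1) + 1/(1+S2))) satisfies R + 1/2 ≥ (1/2)·log₂(1 + min(S1, S2)). That is, the lattice DF scheme achieves within 1/2 bit of the clean two-hop channel capacity. -/
import Mathlib


theorem half_bit_gap (S1 S2 : ℝ) (hS1 : 0 < S1) (hS2 : 0 < S2) :
    (1/2) * Real.logb 2 (1 / (1/(1+S1) + 1/(1+S2))) + 1/2 ≥
      (1/2) * Real.logb 2 (1 + min S1 S2) := by
  have ha : (0:ℝ) < 1 + S1 := by linarith
  have hb : (0:ℝ) < 1 + S2 := by linarith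
  have hm : (0:ℝ) < 1 + min S1 S2 := by
    rcases le_total S1 S2 with h | h <;> simp [min_eq_left, min_eq_right, h] <;> linarith
  have hsum : 0 < 1/(1+S1) + 1/(1+S2) := by positivity
  have h1 : 1/(1+S1) ≤ 1/(1 + min S1 S2) := by
    apply one_div_le_one_div_of_le hm
    have := min_le_left S1 S2; linarith
  have h2 : 1/(1+S2) ≤ 1/(1 + min S1 S2) := by
    apply one_div_le_one_div_of_le hm
    have := min_le_right S1 S2; linarith
  have key : (1 + min S1 S2) / 2 ≤ 1 / (1/(1+S1) + 1/(1+S2)) := by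
    rw [div_le_div_iff₀ (by norm_num) hsum]
    have : 1/(1+S1) + 1/(1+S2) ≤ 2 / (1 + min S1 S2) := by
      have hm2 : 1/(1 + min S1 S2) + 1/(1 + min S1 S2) = 2 / (1 + min S1 S2) := by ring
      linarith
    calc (1 + min S1 S2) * (1/(1+S1) + 1/(1+S2))
        ≤ (1 + min S1 S2) * (2 / (1 + min S1 S2)) := by
          exact mul_le_mul_of_nonneg_left this (le_of_lt hm)
      _ = 2 := by field_simp
      _ = 1 * 2 := by ring
  have hlog : Real.logb 2 ((1 + min S1 S2) / 2) ≤
      Real.logb 2 (1 / (1/(1+S1) + 1/(1+S2))) :=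
    Real.logb_le_logb_of_le (by norm_num) (by positivity) key
  have hdiv : Real.logb 2 ((1 + min S1 S2) / 2) = Real.logb 2 (1 + min S1 S2) - 1 := by
    rw [Real.logb_div (ne_of_gt hm) (by norm_num), Real.logb_self_eq_one] <;> norm_num
  rw [hdiv] at hlog
  linarith
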